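/- arXiv:1708.01833 — 3 statements merged into one kernel-verified Lean document; each statement's English description precedes it below -/
import Mathlib

section
/- Suppose the weighted undirected graph a on n nodes is connected, and let (X*, Y*, Z*, U*, W*, Λ¹*, Λ²*, Λ³*) be an equilibrium of algorithm (CCR-alg). Define, for X_i ∈ ℝ^{r×p}, Y_{vi} ∈ ℝ^{r_i×q}, U_i ∈ ℝ^{m×q} (i = 1,…,n), V₁(X, Y, U) = (1/2)Σ_{i=1}^n ‖A_{li}Y_{vi} − [F_{vi}]_R − U_i‖_F² + Σ_{i=1}^n Σ_{j=1}^n ⟨Λ¹_i*, a_{i,j}(X_i − X_j)⟩_F + Σ_{i=1}^n ⟨Λ²_i*, U_i⟩_F + Σ_{i=1}^n ⟨Λ³_i*, [Y_{vi}]_R − X_i[B_{li}]_C⟩_F − (1/2)Σ_{i=1}^n ‖A_{li}Y_{vi}* − [F_{vi}]_R − U_i*‖_F². Then V₁(X, Y, U) ≥ 0 for all X, Y, U. -/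
/-!
`V₁` is the Lagrangian of the consensus problem (CCR-opt) with the equilibrium multipliers,
shifted so as to vanish at the equilibrium. Writing `R` and `R*` for the residuals
`A_{li} Y_{vi} − [F_{vi}]_R − U_i` at `(Y, U)` and at the equilibrium, convexity of the square
gives `½‖R‖² − ½‖R*‖² ≥ ⟨R*, R − R*⟩`. The equilibrium equations identify `R*` with `Λ²*` and
`A_{li}ᵀ R*` with `−(Λ³*)^{vi}`, and since the graph Laplacian is symmetric it can be moved across
the Frobenius pairings; together they make the affine lower bound vanish identically in `(X, Y, U)`.
-/

open Matrix

/-- Squared Frobenius norm of a real matrix: `‖M‖_F² = tr (Mᵀ M)`. -/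
noncomputable def frobSq {α β : Type*} [Fintype α] [Fintype β] (M : Matrix α β ℝ) : ℝ :=
  Matrix.trace (Mᵀ * M)

/-- Frobenius inner product of real matrices: `⟨M,N⟩_F = tr (Mᵀ N)`. -/
noncomputable def frobInner {α β : Type*} [Fintype α] [Fintype β] (M N : Matrix α β ℝ) : ℝ :=
  Matrix.trace (Mᵀ * N)

/-- The weighted undirected graph with adjacency matrix `a` is connected: any two nodes are
joined by a path of adjacent nodes (nodes `u ≠ v` are adjacent iff `a u v > 0`). -/
def GraphConnected {n : ℕ} (a : Matrix (Fin n) (Fin n) ℝ) : Prop :=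
  ∀ i j : Fin n, Relation.ReflTransGen (fun u v : Fin n => u ≠ v ∧ 0 < a u v) i j

/-- Assemble a family of row blocks `M i ∈ ℝ^{d i × β}` into one matrix. -/
def blockRows {n : ℕ} {d : Fin n → ℕ} {β : Type*} (M : ∀ i, Matrix (Fin (d i)) β ℝ) :
    Matrix ((i : Fin n) × Fin (d i)) β ℝ :=
  Matrix.of fun s j => M s.1 s.2 j

/-- Assemble a family of column blocks `M i ∈ ℝ^{α × d i}` into one matrix. -/
def blockCols {n : ℕ} {d : Fin n → ℕ} {α : Type*} (M : ∀ i, Matrix α (Fin (d i)) ℝ) :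
    Matrix α ((i : Fin n) × Fin (d i)) ℝ :=
  Matrix.of fun k s => M s.1 k s.2

/-- The `i`-th row block of a matrix whose rows are partitioned according to `d`. -/
def rowBlk {n : ℕ} {d : Fin n → ℕ} {β : Type*}
    (Y : Matrix ((i : Fin n) × Fin (d i)) β ℝ) (i : Fin n) :
    Matrix (Fin (d i)) β ℝ :=
  Matrix.of fun k j => Y ⟨i, k⟩ j

/-- `[M]_R`: the matrix whose `i`-th row block is `M` and whose other row blocks are zero. -/
def embedRow {n : ℕ} {d : Fin n → ℕ} {β : Type*} (i : Fin n)
    (M : Matrix (Fin (d i)) β ℝ) :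
    Matrix ((i' : Fin n) × Fin (d i')) β ℝ :=
  Matrix.of fun s j => if h : s.1 = i then M (Fin.cast (congrArg d h) s.2) j else 0

/-- `[M]_C`: the matrix whose `i`-th column block is `M` and whose other column blocks are zero. -/
def embedCol {n : ℕ} {d : Fin n → ℕ} {α : Type*} (i : Fin n)
    (M : Matrix α (Fin (d i)) ℝ) :
    Matrix α ((i' : Fin n) × Fin (d i')) ℝ :=
  Matrix.of fun k s => if h : s.1 = i then M k (Fin.cast (congrArg d h) s.2) else 0

/-- Feasibility for problem (CCR-opt). -/
def CCRfeas {n p : ℕ} {rdim qdim mdim : Fin n → ℕ}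
    (a : Matrix (Fin n) (Fin n) ℝ)
    (Bl : ∀ i, Matrix (Fin p) (Fin (qdim i)) ℝ)
    (X : Fin n → Matrix ((i : Fin n) × Fin (rdim i)) (Fin p) ℝ)
    (Yv : ∀ i, Matrix (Fin (rdim i)) ((i' : Fin n) × Fin (qdim i')) ℝ)
    (Z : Fin n → Matrix ((i : Fin n) × Fin (rdim i)) ((i' : Fin n) × Fin (qdim i')) ℝ)
    (U W : Fin n → Matrix ((i : Fin n) × Fin (mdim i)) ((i' : Fin n) × Fin (qdim i')) ℝ) :
    Prop :=
  (∀ i j, X i = X j) ∧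
  (∀ i, U i = ∑ j, a i j • (W i - W j)) ∧
  (∀ i, embedRow i (Yv i) - X i * embedCol i (Bl i) - ∑ j, a i j • (Z i - Z j) = 0)

/-- Objective of problem (CCR-opt): `Σ_i ‖A_{li} Y_{vi} − [F_{vi}]_R − U_i‖_F²`. -/
noncomputable def CCRobj {n : ℕ} {rdim qdim mdim : Fin n → ℕ}
    (Al : ∀ i, Matrix ((i' : Fin n) × Fin (mdim i')) (Fin (rdim i)) ℝ)
    (Fv : ∀ i, Matrix (Fin (mdim i)) ((i' : Fin n) × Fin (qdim i')) ℝ)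
    (Yv : ∀ i, Matrix (Fin (rdim i)) ((i' : Fin n) × Fin (qdim i')) ℝ)
    (U : Fin n → Matrix ((i : Fin n) × Fin (mdim i)) ((i' : Fin n) × Fin (qdim i')) ℝ) : ℝ :=
  ∑ i, frobSq (Al i * Yv i - embedRow i (Fv i) - U i)

/-- Right-hand side of the `X_i`-equation in algorithm (CCR-alg). -/
noncomputable def CCRrhsX {n p : ℕ} {rdim qdim : Fin n → ℕ}
    (a : Matrix (Fin n) (Fin n) ℝ)
    (Bl : ∀ i, Matrix (Fin p) (Fin (qdim i)) ℝ)
    (X L1 : Fin n → Matrix ((i : Fin n) × Fin (rdim i)) (Fin p) ℝ)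
    (L3 : Fin n → Matrix ((i : Fin n) × Fin (rdim i)) ((i' : Fin n) × Fin (qdim i')) ℝ)
    (i : Fin n) : Matrix ((i : Fin n) × Fin (rdim i)) (Fin p) ℝ :=
  L3 i * (embedCol i (Bl i))ᵀ - ∑ j, a i j • (L1 i - L1 j) - ∑ j, a i j • (X i - X j)

/-- Right-hand side of the `Y_{vi}`-equation in algorithm (CCR-alg). -/
noncomputable def CCRrhsY {n : ℕ} {rdim qdim mdim : Fin n → ℕ}
    (Al : ∀ i, Matrix ((i' : Fin n) × Fin (mdim i')) (Fin (rdim i)) ℝ)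
    (Fv : ∀ i, Matrix (Fin (mdim i)) ((i' : Fin n) × Fin (qdim i')) ℝ)
    (Yv : ∀ i, Matrix (Fin (rdim i)) ((i' : Fin n) × Fin (qdim i')) ℝ)
    (U : Fin n → Matrix ((i : Fin n) × Fin (mdim i)) ((i' : Fin n) × Fin (qdim i')) ℝ)
    (L3 : Fin n → Matrix ((i : Fin n) × Fin (rdim i)) ((i' : Fin n) × Fin (qdim i')) ℝ)
    (i : Fin n) : Matrix (Fin (rdim i)) ((i' : Fin n) × Fin (qdim i')) ℝ :=
  -((Al i)ᵀ * (Al i * Yv i - embedRow i (Fv i) - U i)) - rowBlk (L3 i) i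

/-- Right-hand side of the `U_i`-equation in algorithm (CCR-alg). -/
noncomputable def CCRrhsU {n : ℕ} {rdim qdim mdim : Fin n → ℕ}
    (Al : ∀ i, Matrix ((i' : Fin n) × Fin (mdim i')) (Fin (rdim i)) ℝ)
    (Fv : ∀ i, Matrix (Fin (mdim i)) ((i' : Fin n) × Fin (qdim i')) ℝ)
    (Yv : ∀ i, Matrix (Fin (rdim i)) ((i' : Fin n) × Fin (qdim i')) ℝ)
    (U L2 : Fin n → Matrix ((i : Fin n) × Fin (mdim i)) ((i' : Fin n) × Fin (qdim i')) ℝ)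
    (i : Fin n) : Matrix ((i : Fin n) × Fin (mdim i)) ((i' : Fin n) × Fin (qdim i')) ℝ :=
  Al i * Yv i - embedRow i (Fv i) - U i - L2 i

/-- Right-hand side of the `W_i`-equation in algorithm (CCR-alg). -/
noncomputable def CCRrhsW {n : ℕ} {qdim mdim : Fin n → ℕ}
    (a : Matrix (Fin n) (Fin n) ℝ)
    (L2 : Fin n → Matrix ((i : Fin n) × Fin (mdim i)) ((i' : Fin n) × Fin (qdim i')) ℝ)
    (i : Fin n) : Matrix ((i : Fin n) × Fin (mdim i)) ((i' : Fin n) × Fin (qdim i')) ℝ :=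
  ∑ j, a i j • (L2 i - L2 j)

/-- Right-hand side of the `Z_i`-equation in algorithm (CCR-alg). -/
noncomputable def CCRrhsZ {n : ℕ} {rdim qdim : Fin n → ℕ}
    (a : Matrix (Fin n) (Fin n) ℝ)
    (L3 : Fin n → Matrix ((i : Fin n) × Fin (rdim i)) ((i' : Fin n) × Fin (qdim i')) ℝ)
    (i : Fin n) : Matrix ((i : Fin n) × Fin (rdim i)) ((i' : Fin n) × Fin (qdim i')) ℝ :=
  ∑ j, a i j • (L3 i - L3 j)

/-- Right-hand side of the `Λ¹_i`-equation in algorithm (CCR-alg). -/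
noncomputable def CCRrhsL1 {n p : ℕ} {rdim : Fin n → ℕ}
    (a : Matrix (Fin n) (Fin n) ℝ)
    (X : Fin n → Matrix ((i : Fin n) × Fin (rdim i)) (Fin p) ℝ)
    (i : Fin n) : Matrix ((i : Fin n) × Fin (rdim i)) (Fin p) ℝ :=
  ∑ j, a i j • (X i - X j)

/-- Right-hand side of the `Λ²_i`-equation in algorithm (CCR-alg), with the derivative
feedback replaced by the right-hand side that determines it. -/
noncomputable def CCRrhsL2 {n : ℕ} {rdim qdim mdim : Fin n → ℕ}
    (a : Matrix (Fin n) (Fin n) ℝ)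
    (Al : ∀ i, Matrix ((i' : Fin n) × Fin (mdim i')) (Fin (rdim i)) ℝ)
    (Fv : ∀ i, Matrix (Fin (mdim i)) ((i' : Fin n) × Fin (qdim i')) ℝ)
    (Yv : ∀ i, Matrix (Fin (rdim i)) ((i' : Fin n) × Fin (qdim i')) ℝ)
    (U W L2 : Fin n → Matrix ((i : Fin n) × Fin (mdim i)) ((i' : Fin n) × Fin (qdim i')) ℝ)
    (i : Fin n) : Matrix ((i : Fin n) × Fin (mdim i)) ((i' : Fin n) × Fin (qdim i')) ℝ :=
  U i + CCRrhsU Al Fv Yv U L2 i - ∑ j, a i j • (W i - W j) - ∑ j, a i j • (L2 i - L2 j)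

/-- Right-hand side of the `Λ³_i`-equation in algorithm (CCR-alg), with the derivative
feedback replaced by the right-hand side that determines it. -/
noncomputable def CCRrhsL3 {n p : ℕ} {rdim qdim mdim : Fin n → ℕ}
    (a : Matrix (Fin n) (Fin n) ℝ)
    (Al : ∀ i, Matrix ((i' : Fin n) × Fin (mdim i')) (Fin (rdim i)) ℝ)
    (Bl : ∀ i, Matrix (Fin p) (Fin (qdim i)) ℝ)
    (Fv : ∀ i, Matrix (Fin (mdim i)) ((i' : Fin n) × Fin (qdim i')) ℝ)
    (X : Fin n → Matrix ((i : Fin n) × Fin (rdim i)) (Fin p) ℝ)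
    (Yv : ∀ i, Matrix (Fin (rdim i)) ((i' : Fin n) × Fin (qdim i')) ℝ)
    (Z : Fin n → Matrix ((i : Fin n) × Fin (rdim i)) ((i' : Fin n) × Fin (qdim i')) ℝ)
    (U L2 : Fin n → Matrix ((i : Fin n) × Fin (mdim i)) ((i' : Fin n) × Fin (qdim i')) ℝ)
    (L3 : Fin n → Matrix ((i : Fin n) × Fin (rdim i)) ((i' : Fin n) × Fin (qdim i')) ℝ)
    (i : Fin n) : Matrix ((i : Fin n) × Fin (rdim i)) ((i' : Fin n) × Fin (qdim i')) ℝ :=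
  embedRow i (Yv i) + embedRow i (CCRrhsY Al Fv Yv U L3 i)
    - X i * embedCol i (Bl i) - ∑ j, a i j • (Z i - Z j) - ∑ j, a i j • (L3 i - L3 j)

/-- Equilibrium of algorithm (CCR-alg): all right-hand sides vanish. -/
noncomputable def CCRequil {n p : ℕ} {rdim qdim mdim : Fin n → ℕ}
    (a : Matrix (Fin n) (Fin n) ℝ)
    (Al : ∀ i, Matrix ((i' : Fin n) × Fin (mdim i')) (Fin (rdim i)) ℝ)
    (Bl : ∀ i, Matrix (Fin p) (Fin (qdim i)) ℝ)
    (Fv : ∀ i, Matrix (Fin (mdim i)) ((i' : Fin n) × Fin (qdim i')) ℝ)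
    (X : Fin n → Matrix ((i : Fin n) × Fin (rdim i)) (Fin p) ℝ)
    (Yv : ∀ i, Matrix (Fin (rdim i)) ((i' : Fin n) × Fin (qdim i')) ℝ)
    (Z : Fin n → Matrix ((i : Fin n) × Fin (rdim i)) ((i' : Fin n) × Fin (qdim i')) ℝ)
    (U W : Fin n → Matrix ((i : Fin n) × Fin (mdim i)) ((i' : Fin n) × Fin (qdim i')) ℝ)
    (L1 : Fin n → Matrix ((i : Fin n) × Fin (rdim i)) (Fin p) ℝ)
    (L2 : Fin n → Matrix ((i : Fin n) × Fin (mdim i)) ((i' : Fin n) × Fin (qdim i')) ℝ)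
    (L3 : Fin n → Matrix ((i : Fin n) × Fin (rdim i)) ((i' : Fin n) × Fin (qdim i')) ℝ) :
    Prop :=
  ∀ i, CCRrhsX a Bl X L1 L3 i = 0 ∧ CCRrhsY Al Fv Yv U L3 i = 0 ∧
    CCRrhsU Al Fv Yv U L2 i = 0 ∧ CCRrhsW a L2 i = 0 ∧ CCRrhsZ a L3 i = 0 ∧
    CCRrhsL1 a X i = 0 ∧ CCRrhsL2 a Al Fv Yv U W L2 i = 0 ∧
    CCRrhsL3 a Al Bl Fv X Yv Z U L2 L3 i = 0

section Frobenius

variable {α β γ : Type*} [Fintype α] [Fintype β] [Fintype γ]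

theorem frobInner_eq_sum (M N : Matrix α β ℝ) : frobInner M N = ∑ i, ∑ j, M i j * N i j := by
  rw [frobInner, Matrix.trace, Finset.sum_comm]
  simp [Matrix.mul_apply]

theorem frobInner_comm (M N : Matrix α β ℝ) : frobInner M N = frobInner N M := by
  simp only [frobInner_eq_sum, mul_comm]

theorem frobInner_add_left (M₁ M₂ N : Matrix α β ℝ) :
    frobInner (M₁ + M₂) N = frobInner M₁ N + frobInner M₂ N := by
  simp only [frobInner_eq_sum, Matrix.add_apply, add_mul, Finset.sum_add_distrib]

theorem frobInner_smul_left (c : ℝ) (M N : Matrix α β ℝ) :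
    frobInner (c • M) N = c * frobInner M N := by
  simp only [frobInner_eq_sum, Matrix.smul_apply, smul_eq_mul, Finset.mul_sum, mul_assoc]

theorem frobInner_add_right (M N₁ N₂ : Matrix α β ℝ) :
    frobInner M (N₁ + N₂) = frobInner M N₁ + frobInner M N₂ := by
  simp only [frobInner_comm M, frobInner_add_left]

theorem frobInner_smul_right (c : ℝ) (M N : Matrix α β ℝ) :
    frobInner M (c • N) = c * frobInner M N := by
  simp only [frobInner_comm M, frobInner_smul_left]

noncomputable def frobInnerₗ : Matrix α β ℝ →ₗ[ℝ] Matrix α β ℝ →ₗ[ℝ] ℝ :=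
  LinearMap.mk₂ ℝ frobInner frobInner_add_left frobInner_smul_left frobInner_add_right
    frobInner_smul_right

theorem frobInner_sub_right (M N₁ N₂ : Matrix α β ℝ) :
    frobInner M (N₁ - N₂) = frobInner M N₁ - frobInner M N₂ :=
  (frobInnerₗ M).map_sub N₁ N₂

theorem frobInner_neg_left (M N : Matrix α β ℝ) : frobInner (-M) N = -frobInner M N :=
  LinearMap.congr_fun (frobInnerₗ.map_neg M) N

theorem frobInner_sum_right {ι : Type*} (s : Finset ι) (M : Matrix α β ℝ)
    (N : ι → Matrix α β ℝ) : frobInner M (∑ j ∈ s, N j) = ∑ j ∈ s, frobInner M (N j) :=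
  map_sum (frobInnerₗ M) N s

theorem frobInner_mul_left (P : Matrix α β ℝ) (M : Matrix α γ ℝ) (N : Matrix γ β ℝ) :
    frobInner P (M * N) = frobInner (Mᵀ * P) N := by
  simp only [frobInner, Matrix.transpose_mul, Matrix.transpose_transpose, Matrix.mul_assoc]

theorem frobInner_mul_right (P : Matrix α β ℝ) (M : Matrix α γ ℝ) (N : Matrix γ β ℝ) :
    frobInner P (M * N) = frobInner (P * Nᵀ) M := by
  rw [frobInner, frobInner, Matrix.transpose_mul, Matrix.transpose_transpose,
    ← Matrix.mul_assoc, Matrix.trace_mul_comm, Matrix.mul_assoc]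

theorem frobInner_sub_le_half_frobSq_sub (M N : Matrix α β ℝ) :
    frobInner N (M - N) ≤ frobSq M / 2 - frobSq N / 2 := by
  have hsq : ∀ i j, N i j * (M - N) i j ≤ M i j * M i j / 2 - N i j * N i j / 2 := fun i j => by
    rw [Matrix.sub_apply]; nlinarith [sq_nonneg (M i j - N i j)]
  change frobInner N (M - N) ≤ frobInner M M / 2 - frobInner N N / 2
  simp only [frobInner_eq_sum, Finset.sum_div, ← Finset.sum_sub_distrib]
  exact Finset.sum_le_sum fun i _ => Finset.sum_le_sum fun j _ => hsq i j

end Frobenius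

section BlockEmbedding

variable {n : ℕ} {d : Fin n → ℕ} {β : Type*}

theorem embedRow_zero (i : Fin n) : embedRow (β := β) (d := d) i 0 = 0 := by
  ext s j
  simp [embedRow]

theorem frobInner_embedRow [Fintype β] (i : Fin n) (L : Matrix ((i' : Fin n) × Fin (d i')) β ℝ)
    (M : Matrix (Fin (d i)) β ℝ) : frobInner L (embedRow i M) = frobInner (rowBlk L i) M := by
  simp only [frobInner_eq_sum, embedRow, rowBlk, Matrix.of_apply, ← Finset.univ_sigma_univ,
    Finset.sum_sigma, mul_dite, mul_zero]
  rw [Finset.sum_eq_single i (fun i' _ hi' => by simp [hi']) (by simp)]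
  simp

end BlockEmbedding

section GraphLaplacian

variable {ι R E F : Type*} [Fintype ι]

def graphLaplacian [Ring R] [AddCommGroup E] [Module R E] (a : Matrix ι ι R) (x : ι → E) :
    ι → E :=
  fun i => ∑ j, a i j • (x i - x j)

theorem sum_bilin_graphLaplacian_comm [CommRing R] [AddCommGroup E] [Module R E]
    [AddCommGroup F] [Module R F] (B : E →ₗ[R] F →ₗ[R] R) {a : Matrix ι ι R} (ha : a.IsSymm)
    (x : ι → E) (y : ι → F) :
    ∑ i, B (x i) (graphLaplacian a y i) = ∑ i, B (graphLaplacian a x i) (y i) := by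
  have hswap : ∑ i, ∑ j, a i j * B (x i) (y j) = ∑ i, ∑ j, a i j * B (x j) (y i) := by
    rw [Finset.sum_comm]
    simp only [ha.apply]
  simp only [graphLaplacian, map_sum, map_smul, map_sub, LinearMap.sum_apply,
    LinearMap.smul_apply, LinearMap.sub_apply, smul_eq_mul, mul_sub, Finset.sum_sub_distrib,
    hswap]

theorem sum_bilin_graphLaplacian_eq_zero [CommRing R] [AddCommGroup E] [Module R E]
    [AddCommGroup F] [Module R F] (B : E →ₗ[R] F →ₗ[R] R) {a : Matrix ι ι R} (ha : a.IsSymm)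
    {x : ι → E} (hx : graphLaplacian a x = 0) (y : ι → F) :
    ∑ i, B (x i) (graphLaplacian a y i) = 0 := by
  simp [sum_bilin_graphLaplacian_comm B ha, hx]

end GraphLaplacian

namespace CCRequil

variable {n p : ℕ} {rdim qdim mdim : Fin n → ℕ} {a : Matrix (Fin n) (Fin n) ℝ}
  {Al : ∀ i, Matrix ((i' : Fin n) × Fin (mdim i')) (Fin (rdim i)) ℝ}
  {Bl : ∀ i, Matrix (Fin p) (Fin (qdim i)) ℝ}
  {Fv : ∀ i, Matrix (Fin (mdim i)) ((i' : Fin n) × Fin (qdim i')) ℝ}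
  {Xs : Fin n → Matrix ((i : Fin n) × Fin (rdim i)) (Fin p) ℝ}
  {Ys : ∀ i, Matrix (Fin (rdim i)) ((i' : Fin n) × Fin (qdim i')) ℝ}
  {Zs : Fin n → Matrix ((i : Fin n) × Fin (rdim i)) ((i' : Fin n) × Fin (qdim i')) ℝ}
  {Us Ws : Fin n → Matrix ((i : Fin n) × Fin (mdim i)) ((i' : Fin n) × Fin (qdim i')) ℝ}
  {L1s : Fin n → Matrix ((i : Fin n) × Fin (rdim i)) (Fin p) ℝ}
  {L2s : Fin n → Matrix ((i : Fin n) × Fin (mdim i)) ((i' : Fin n) × Fin (qdim i')) ℝ}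
  {L3s : Fin n → Matrix ((i : Fin n) × Fin (rdim i)) ((i' : Fin n) × Fin (qdim i')) ℝ}

theorem residual_eq (h : CCRequil a Al Bl Fv Xs Ys Zs Us Ws L1s L2s L3s) (i : Fin n) :
    Al i * Ys i - embedRow i (Fv i) - Us i = L2s i :=
  sub_eq_zero.mp (h i).2.2.1

theorem transpose_mul_residual (h : CCRequil a Al Bl Fv Xs Ys Zs Us Ws L1s L2s L3s) (i : Fin n) :
    (Al i)ᵀ * (Al i * Ys i - embedRow i (Fv i) - Us i) = -rowBlk (L3s i) i :=
  neg_eq_iff_eq_neg.mp (sub_eq_zero.mp (h i).2.1)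

theorem graphLaplacian_X (h : CCRequil a Al Bl Fv Xs Ys Zs Us Ws L1s L2s L3s) :
    graphLaplacian a Xs = 0 :=
  funext fun i => (h i).2.2.2.2.2.1

theorem graphLaplacian_L2 (h : CCRequil a Al Bl Fv Xs Ys Zs Us Ws L1s L2s L3s) :
    graphLaplacian a L2s = 0 :=
  funext fun i => (h i).2.2.2.1

theorem graphLaplacian_L3 (h : CCRequil a Al Bl Fv Xs Ys Zs Us Ws L1s L2s L3s) :
    graphLaplacian a L3s = 0 :=
  funext fun i => (h i).2.2.2.2.1

theorem mul_transpose_embedCol (h : CCRequil a Al Bl Fv Xs Ys Zs Us Ws L1s L2s L3s) (i : Fin n) :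
    L3s i * (embedCol i (Bl i))ᵀ = graphLaplacian a L1s i := by
  have hX := (h i).1
  rw [CCRrhsX, show ∑ j, a i j • (Xs i - Xs j) = 0 from congrFun h.graphLaplacian_X i,
    sub_zero] at hX
  exact sub_eq_zero.mp hX

theorem Us_eq (h : CCRequil a Al Bl Fv Xs Ys Zs Us Ws L1s L2s L3s) (i : Fin n) :
    Us i = graphLaplacian a Ws i := by
  have hL2 := (h i).2.2.2.2.2.2.1
  rw [CCRrhsL2, (h i).2.2.1, show ∑ j, a i j • (L2s i - L2s j) = 0 from
    congrFun h.graphLaplacian_L2 i, add_zero, sub_zero] at hL2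
  exact sub_eq_zero.mp hL2

theorem embedRow_Ys (h : CCRequil a Al Bl Fv Xs Ys Zs Us Ws L1s L2s L3s) (i : Fin n) :
    embedRow i (Ys i) = Xs i * embedCol i (Bl i) + graphLaplacian a Zs i := by
  have hL3 := (h i).2.2.2.2.2.2.2
  rw [CCRrhsL3, (h i).2.1, embedRow_zero, add_zero, show ∑ j, a i j • (L3s i - L3s j) = 0 from
    congrFun h.graphLaplacian_L3 i, sub_zero, sub_sub, sub_eq_zero] at hL3
  exact hL3

theorem sum_frobInner_mul_embedCol (h : CCRequil a Al Bl Fv Xs Ys Zs Us Ws L1s L2s L3s)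
    (ha : a.IsSymm) (X : Fin n → Matrix ((i : Fin n) × Fin (rdim i)) (Fin p) ℝ) :
    ∑ i, frobInner (L3s i) (X i * embedCol i (Bl i))
      = ∑ i, frobInner (L1s i) (graphLaplacian a X i) := by
  simp only [frobInner_mul_right, h.mul_transpose_embedCol]
  exact (sum_bilin_graphLaplacian_comm frobInnerₗ ha L1s X).symm

theorem sum_frobInner_Us (h : CCRequil a Al Bl Fv Xs Ys Zs Us Ws L1s L2s L3s) (ha : a.IsSymm) :
    ∑ i, frobInner (L2s i) (Us i) = 0 := by
  simp only [h.Us_eq]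
  exact sum_bilin_graphLaplacian_eq_zero frobInnerₗ ha h.graphLaplacian_L2 Ws

theorem sum_frobInner_embedRow_Ys (h : CCRequil a Al Bl Fv Xs Ys Zs Us Ws L1s L2s L3s)
    (ha : a.IsSymm) : ∑ i, frobInner (L3s i) (embedRow i (Ys i)) = 0 := by
  simp only [h.embedRow_Ys, frobInner_add_right, Finset.sum_add_distrib,
    h.sum_frobInner_mul_embedCol ha]
  have hX : ∑ i, frobInner (L1s i) (graphLaplacian a Xs i) = 0 := by
    simp [h.graphLaplacian_X, frobInner]
  have hZ : ∑ i, frobInner (L3s i) (graphLaplacian a Zs i) = 0 :=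
    sum_bilin_graphLaplacian_eq_zero frobInnerₗ ha h.graphLaplacian_L3 Zs
  rw [hX, hZ, add_zero]

theorem frobInner_residual_sub (h : CCRequil a Al Bl Fv Xs Ys Zs Us Ws L1s L2s L3s) (i : Fin n)
    (Yv : Matrix (Fin (rdim i)) ((i' : Fin n) × Fin (qdim i')) ℝ)
    (U : Matrix ((i : Fin n) × Fin (mdim i)) ((i' : Fin n) × Fin (qdim i')) ℝ) :
    frobInner (Al i * Ys i - embedRow i (Fv i) - Us i)
        ((Al i * Yv - embedRow i (Fv i) - U) - (Al i * Ys i - embedRow i (Fv i) - Us i))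
      = frobInner (L3s i) (embedRow i (Ys i)) - frobInner (L3s i) (embedRow i Yv)
        - frobInner (L2s i) U + frobInner (L2s i) (Us i) := by
  have hdiff : (Al i * Yv - embedRow i (Fv i) - U) - (Al i * Ys i - embedRow i (Fv i) - Us i)
      = Al i * (Yv - Ys i) - (U - Us i) := by
    rw [Matrix.mul_sub]; abel
  rw [hdiff, frobInner_sub_right, frobInner_mul_left, h.transpose_mul_residual, h.residual_eq,
    frobInner_neg_left, frobInner_embedRow, frobInner_embedRow, frobInner_sub_right,
    frobInner_sub_right]
  ring

theorem lagrangian_first_variation_eq_zero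
    (h : CCRequil a Al Bl Fv Xs Ys Zs Us Ws L1s L2s L3s) (ha : a.IsSymm)
    (X : Fin n → Matrix ((i : Fin n) × Fin (rdim i)) (Fin p) ℝ)
    (Yv : ∀ i, Matrix (Fin (rdim i)) ((i' : Fin n) × Fin (qdim i')) ℝ)
    (U : Fin n → Matrix ((i : Fin n) × Fin (mdim i)) ((i' : Fin n) × Fin (qdim i')) ℝ) :
    ∑ i, frobInner (Al i * Ys i - embedRow i (Fv i) - Us i)
          ((Al i * Yv i - embedRow i (Fv i) - U i) - (Al i * Ys i - embedRow i (Fv i) - Us i))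
        + ∑ i, ∑ j, frobInner (L1s i) (a i j • (X i - X j))
        + ∑ i, frobInner (L2s i) (U i)
        + ∑ i, frobInner (L3s i) (embedRow i (Yv i) - X i * embedCol i (Bl i)) = 0 := by
  have hL1 : ∑ i, ∑ j, frobInner (L1s i) (a i j • (X i - X j))
      = ∑ i, frobInner (L3s i) (X i * embedCol i (Bl i)) := by
    simp only [h.sum_frobInner_mul_embedCol ha X, graphLaplacian, frobInner_sum_right]
  simp only [h.frobInner_residual_sub, frobInner_sub_right, Finset.sum_add_distrib,
    Finset.sum_sub_distrib, hL1, h.sum_frobInner_Us ha, h.sum_frobInner_embedRow_Ys ha]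
  ring

end CCRequil

theorem stmt_13_general (n p : ℕ) (rdim qdim mdim : Fin n → ℕ)
    (a : Matrix (Fin n) (Fin n) ℝ)
    (hsym : ∀ i j, a i j = a j i)
    (Al : ∀ i, Matrix ((i' : Fin n) × Fin (mdim i')) (Fin (rdim i)) ℝ)
    (Bl : ∀ i, Matrix (Fin p) (Fin (qdim i)) ℝ)
    (Fv : ∀ i, Matrix (Fin (mdim i)) ((i' : Fin n) × Fin (qdim i')) ℝ)
    (Xs : Fin n → Matrix ((i : Fin n) × Fin (rdim i)) (Fin p) ℝ)
    (Ys : ∀ i, Matrix (Fin (rdim i)) ((i' : Fin n) × Fin (qdim i')) ℝ)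
    (Zs : Fin n → Matrix ((i : Fin n) × Fin (rdim i)) ((i' : Fin n) × Fin (qdim i')) ℝ)
    (Us Ws : Fin n → Matrix ((i : Fin n) × Fin (mdim i)) ((i' : Fin n) × Fin (qdim i')) ℝ)
    (L1s : Fin n → Matrix ((i : Fin n) × Fin (rdim i)) (Fin p) ℝ)
    (L2s : Fin n → Matrix ((i : Fin n) × Fin (mdim i)) ((i' : Fin n) × Fin (qdim i')) ℝ)
    (L3s : Fin n → Matrix ((i : Fin n) × Fin (rdim i)) ((i' : Fin n) × Fin (qdim i')) ℝ)
    (hequil : CCRequil a Al Bl Fv Xs Ys Zs Us Ws L1s L2s L3s)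
    (X : Fin n → Matrix ((i : Fin n) × Fin (rdim i)) (Fin p) ℝ)
    (Yv : ∀ i, Matrix (Fin (rdim i)) ((i' : Fin n) × Fin (qdim i')) ℝ)
    (U : Fin n → Matrix ((i : Fin n) × Fin (mdim i)) ((i' : Fin n) × Fin (qdim i')) ℝ) :
    0 ≤ (1 / 2) * (∑ i, frobSq (Al i * Yv i - embedRow i (Fv i) - U i))
        + (∑ i, ∑ j, frobInner (L1s i) (a i j • (X i - X j)))
        + (∑ i, frobInner (L2s i) (U i))
        + (∑ i, frobInner (L3s i) (embedRow i (Yv i) - X i * embedCol i (Bl i)))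
        - (1 / 2) * (∑ i, frobSq (Al i * Ys i - embedRow i (Fv i) - Us i)) := by
  have hconvex := Finset.sum_le_sum fun i (_ : i ∈ Finset.univ) =>
    frobInner_sub_le_half_frobSq_sub (Al i * Yv i - embedRow i (Fv i) - U i)
      (Al i * Ys i - embedRow i (Fv i) - Us i)
  rw [Finset.sum_sub_distrib, ← Finset.sum_div, ← Finset.sum_div] at hconvex
  have hstationary := hequil.lagrangian_first_variation_eq_zero
    (Matrix.IsSymm.ext fun i j => hsym j i) X Yv U
  linarith

theorem stmt_13 (n p : ℕ) (hn : 0 < n) (rdim qdim mdim : Fin n → ℕ)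
    (a : Matrix (Fin n) (Fin n) ℝ)
    (hsym : ∀ i j, a i j = a j i) (hnonneg : ∀ i j, 0 ≤ a i j)
    (hdiag : ∀ i, a i i = 0) (hconn : GraphConnected a)
    (Al : ∀ i, Matrix ((i' : Fin n) × Fin (mdim i')) (Fin (rdim i)) ℝ)
    (Bl : ∀ i, Matrix (Fin p) (Fin (qdim i)) ℝ)
    (Fv : ∀ i, Matrix (Fin (mdim i)) ((i' : Fin n) × Fin (qdim i')) ℝ)
    (Xs : Fin n → Matrix ((i : Fin n) × Fin (rdim i)) (Fin p) ℝ)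
    (Ys : ∀ i, Matrix (Fin (rdim i)) ((i' : Fin n) × Fin (qdim i')) ℝ)
    (Zs : Fin n → Matrix ((i : Fin n) × Fin (rdim i)) ((i' : Fin n) × Fin (qdim i')) ℝ)
    (Us Ws : Fin n → Matrix ((i : Fin n) × Fin (mdim i)) ((i' : Fin n) × Fin (qdim i')) ℝ)
    (L1s : Fin n → Matrix ((i : Fin n) × Fin (rdim i)) (Fin p) ℝ)
    (L2s : Fin n → Matrix ((i : Fin n) × Fin (mdim i)) ((i' : Fin n) × Fin (qdim i')) ℝ)
    (L3s : Fin n → Matrix ((i : Fin n) × Fin (rdim i)) ((i' : Fin n) × Fin (qdim i')) ℝ)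
    (hequil : CCRequil a Al Bl Fv Xs Ys Zs Us Ws L1s L2s L3s)
    (X : Fin n → Matrix ((i : Fin n) × Fin (rdim i)) (Fin p) ℝ)
    (Yv : ∀ i, Matrix (Fin (rdim i)) ((i' : Fin n) × Fin (qdim i')) ℝ)
    (U : Fin n → Matrix ((i : Fin n) × Fin (mdim i)) ((i' : Fin n) × Fin (qdim i')) ℝ) :
    0 ≤ (1 / 2) * (∑ i, frobSq (Al i * Yv i - embedRow i (Fv i) - U i))
        + (∑ i, ∑ j, frobInner (L1s i) (a i j • (X i - X j)))
        + (∑ i, frobInner (L2s i) (U i))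
        + (∑ i, frobInner (L3s i) (embedRow i (Yv i) - X i * embedCol i (Bl i)))
        - (1 / 2) * (∑ i, frobSq (Al i * Ys i - embedRow i (Fv i) - Us i)) :=
  stmt_13_general n p rdim qdim mdim a hsym Al Bl Fv Xs Ys Zs Us Ws L1s L2s L3s hequil X Yv U
end

section
/- Suppose the weighted undirected graph a on n nodes is connected. In the CRR structure, X* = [X_{l1}*,…,X_{ln}*] ∈ ℝ^{r×p} is a least squares solution to AXB = F if and only if there exist Y_{vi}* ∈ ℝ^{r_i×q}, Z_i* ∈ ℝ^{r×q}, U_i* ∈ ℝ^{m×q}, W_i* ∈ ℝ^{m×q} (i = 1,…,n) such that (X*, Y*, Z*, U*, W*) is an optimal solution of problem (CRR-opt), i.e., it is feasible and attains the minimum of the objective over the feasible set. -/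
open Matrix

/-- Feasibility for problem (CRR-opt). -/
def CRRfeas {n q : ℕ} {rdim mdim pdim : Fin n → ℕ}
    (a : Matrix (Fin n) (Fin n) ℝ)
    (Bv : ∀ i, Matrix (Fin (pdim i)) (Fin q) ℝ)
    (Xl : ∀ i, Matrix ((i' : Fin n) × Fin (rdim i')) (Fin (pdim i)) ℝ)
    (Yv : ∀ i, Matrix (Fin (rdim i)) (Fin q) ℝ)
    (Z : Fin n → Matrix ((i : Fin n) × Fin (rdim i)) (Fin q) ℝ)
    (U W : Fin n → Matrix ((i : Fin n) × Fin (mdim i)) (Fin q) ℝ) : Prop :=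
  (∀ i, embedRow i (Yv i) - Xl i * Bv i - ∑ j, a i j • (Z i - Z j) = 0) ∧
  (∀ i, U i = ∑ j, a i j • (W i - W j))

/-- Objective of problem (CRR-opt): `Σ_i ‖A_{li} Y_{vi} − [F_{vi}]_R − U_i‖_F²`. -/
noncomputable def CRRobj {n q : ℕ} {rdim mdim : Fin n → ℕ}
    (Al : ∀ i, Matrix ((i' : Fin n) × Fin (mdim i')) (Fin (rdim i)) ℝ)
    (Fv : ∀ i, Matrix (Fin (mdim i)) (Fin q) ℝ)
    (Yv : ∀ i, Matrix (Fin (rdim i)) (Fin q) ℝ)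
    (U : Fin n → Matrix ((i : Fin n) × Fin (mdim i)) (Fin q) ℝ) : ℝ :=
  ∑ i, frobSq (Al i * Yv i - embedRow i (Fv i) - U i)

/-- Right-hand side of the `X_{li}`-equation in algorithm (CRR-alg). -/
noncomputable def CRRrhsX {n q : ℕ} {rdim pdim : Fin n → ℕ}
    (Bv : ∀ i, Matrix (Fin (pdim i)) (Fin q) ℝ)
    (L2 : Fin n → Matrix ((i : Fin n) × Fin (rdim i)) (Fin q) ℝ) (i : Fin n) :
    Matrix ((i' : Fin n) × Fin (rdim i')) (Fin (pdim i)) ℝ :=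
  L2 i * (Bv i)ᵀ

/-- Right-hand side of the `Y_{vi}`-equation in algorithm (CRR-alg). -/
noncomputable def CRRrhsY {n q : ℕ} {rdim mdim : Fin n → ℕ}
    (Al : ∀ i, Matrix ((i' : Fin n) × Fin (mdim i')) (Fin (rdim i)) ℝ)
    (Fv : ∀ i, Matrix (Fin (mdim i)) (Fin q) ℝ)
    (Yv : ∀ i, Matrix (Fin (rdim i)) (Fin q) ℝ)
    (U : Fin n → Matrix ((i : Fin n) × Fin (mdim i)) (Fin q) ℝ)
    (L2 : Fin n → Matrix ((i : Fin n) × Fin (rdim i)) (Fin q) ℝ) (i : Fin n) :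
    Matrix (Fin (rdim i)) (Fin q) ℝ :=
  -((Al i)ᵀ * (Al i * Yv i - embedRow i (Fv i) - U i)) - rowBlk (L2 i) i

/-- Right-hand side of the `U_i`-equation in algorithm (CRR-alg). -/
noncomputable def CRRrhsU {n q : ℕ} {rdim mdim : Fin n → ℕ}
    (Al : ∀ i, Matrix ((i' : Fin n) × Fin (mdim i')) (Fin (rdim i)) ℝ)
    (Fv : ∀ i, Matrix (Fin (mdim i)) (Fin q) ℝ)
    (Yv : ∀ i, Matrix (Fin (rdim i)) (Fin q) ℝ)
    (U L1 : Fin n → Matrix ((i : Fin n) × Fin (mdim i)) (Fin q) ℝ) (i : Fin n) :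
    Matrix ((i : Fin n) × Fin (mdim i)) (Fin q) ℝ :=
  Al i * Yv i - embedRow i (Fv i) - U i - L1 i

/-- Right-hand side of the `W_i`-equation in algorithm (CRR-alg). -/
noncomputable def CRRrhsW {n q : ℕ} {mdim : Fin n → ℕ}
    (a : Matrix (Fin n) (Fin n) ℝ)
    (L1 : Fin n → Matrix ((i : Fin n) × Fin (mdim i)) (Fin q) ℝ) (i : Fin n) :
    Matrix ((i : Fin n) × Fin (mdim i)) (Fin q) ℝ :=
  ∑ j, a i j • (L1 i - L1 j)

/-- Right-hand side of the `Z_i`-equation in algorithm (CRR-alg). -/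
noncomputable def CRRrhsZ {n q : ℕ} {rdim : Fin n → ℕ}
    (a : Matrix (Fin n) (Fin n) ℝ)
    (L2 : Fin n → Matrix ((i : Fin n) × Fin (rdim i)) (Fin q) ℝ) (i : Fin n) :
    Matrix ((i : Fin n) × Fin (rdim i)) (Fin q) ℝ :=
  ∑ j, a i j • (L2 i - L2 j)

/-- Right-hand side of the `Λ¹_i`-equation in algorithm (CRR-alg), with the derivative
feedback replaced by the right-hand side that determines it. -/
noncomputable def CRRrhsL1 {n q : ℕ} {rdim mdim : Fin n → ℕ}
    (a : Matrix (Fin n) (Fin n) ℝ)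
    (Al : ∀ i, Matrix ((i' : Fin n) × Fin (mdim i')) (Fin (rdim i)) ℝ)
    (Fv : ∀ i, Matrix (Fin (mdim i)) (Fin q) ℝ)
    (Yv : ∀ i, Matrix (Fin (rdim i)) (Fin q) ℝ)
    (U W L1 : Fin n → Matrix ((i : Fin n) × Fin (mdim i)) (Fin q) ℝ) (i : Fin n) :
    Matrix ((i : Fin n) × Fin (mdim i)) (Fin q) ℝ :=
  U i + CRRrhsU Al Fv Yv U L1 i - ∑ j, a i j • (W i - W j) - ∑ j, a i j • (L1 i - L1 j)

/-- Right-hand side of the `Λ²_i`-equation in algorithm (CRR-alg), with the derivative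
feedbacks replaced by the right-hand sides that determine them. -/
noncomputable def CRRrhsL2 {n q : ℕ} {rdim mdim pdim : Fin n → ℕ}
    (a : Matrix (Fin n) (Fin n) ℝ)
    (Al : ∀ i, Matrix ((i' : Fin n) × Fin (mdim i')) (Fin (rdim i)) ℝ)
    (Bv : ∀ i, Matrix (Fin (pdim i)) (Fin q) ℝ)
    (Fv : ∀ i, Matrix (Fin (mdim i)) (Fin q) ℝ)
    (Xl : ∀ i, Matrix ((i' : Fin n) × Fin (rdim i')) (Fin (pdim i)) ℝ)
    (Yv : ∀ i, Matrix (Fin (rdim i)) (Fin q) ℝ)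
    (Z : Fin n → Matrix ((i : Fin n) × Fin (rdim i)) (Fin q) ℝ)
    (U : Fin n → Matrix ((i : Fin n) × Fin (mdim i)) (Fin q) ℝ)
    (L2 : Fin n → Matrix ((i : Fin n) × Fin (rdim i)) (Fin q) ℝ) (i : Fin n) :
    Matrix ((i : Fin n) × Fin (rdim i)) (Fin q) ℝ :=
  embedRow i (Yv i) + embedRow i (CRRrhsY Al Fv Yv U L2 i) - Xl i * Bv i
    - ∑ j, a i j • (Z i - Z j) - ∑ j, a i j • (L2 i - L2 j)
    - CRRrhsX Bv L2 i * Bv i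

/-- Equilibrium of algorithm (CRR-alg): all right-hand sides vanish. -/
noncomputable def CRRequil {n q : ℕ} {rdim mdim pdim : Fin n → ℕ}
    (a : Matrix (Fin n) (Fin n) ℝ)
    (Al : ∀ i, Matrix ((i' : Fin n) × Fin (mdim i')) (Fin (rdim i)) ℝ)
    (Bv : ∀ i, Matrix (Fin (pdim i)) (Fin q) ℝ)
    (Fv : ∀ i, Matrix (Fin (mdim i)) (Fin q) ℝ)
    (Xl : ∀ i, Matrix ((i' : Fin n) × Fin (rdim i')) (Fin (pdim i)) ℝ)
    (Yv : ∀ i, Matrix (Fin (rdim i)) (Fin q) ℝ)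
    (Z : Fin n → Matrix ((i : Fin n) × Fin (rdim i)) (Fin q) ℝ)
    (U W L1 : Fin n → Matrix ((i : Fin n) × Fin (mdim i)) (Fin q) ℝ)
    (L2 : Fin n → Matrix ((i : Fin n) × Fin (rdim i)) (Fin q) ℝ) : Prop :=
  ∀ i, CRRrhsX Bv L2 i = 0 ∧ CRRrhsY Al Fv Yv U L2 i = 0 ∧
    CRRrhsU Al Fv Yv U L1 i = 0 ∧ CRRrhsW a L1 i = 0 ∧ CRRrhsZ a L2 i = 0 ∧
    CRRrhsL1 a Al Fv Yv U W L1 i = 0 ∧ CRRrhsL2 a Al Bv Fv Xl Yv Z U L2 i = 0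
/-!
At a feasible point of (CRR-opt) the Laplacian terms cancel when summed over the nodes, so the
local residuals `A_{li} Y_{vi} - [F_{vi}]_R - U_i` add up to the global residual `AXB - F`, and
Cauchy–Schwarz gives `‖AXB - F‖_F² ≤ n · obj`. Conversely, the Laplacian of a connected graph maps
onto the families with zero sum, so for every `X` one can choose `Z` and `W` that make each local
residual equal to `(AXB - F) / n`, where this bound is attained. Hence the least value of the
objective over the feasible points with first component `X` is `‖AXB - F‖_F² / n`, and the two
problems are minimised by the same `X`.
-/

open Finset

section Frobenius

variable {α β : Type*} [Fintype α] [Fintype β]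

lemma frobSq_eq_sum_sq (M : Matrix α β ℝ) : frobSq M = ∑ j, ∑ k, M k j ^ 2 := by
  simp [frobSq, Matrix.trace, Matrix.mul_apply, sq]

lemma frobSq_smul (c : ℝ) (M : Matrix α β ℝ) : frobSq (c • M) = c ^ 2 * frobSq M := by
  simp only [frobSq_eq_sum_sq, Matrix.smul_apply, smul_eq_mul, mul_pow, mul_sum]

lemma frobSq_sum_le_card_mul {ι : Type*} [Fintype ι] (V : ι → Matrix α β ℝ) :
    frobSq (∑ i, V i) ≤ Fintype.card ι * ∑ i, frobSq (V i) := by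
  calc frobSq (∑ i, V i) = ∑ j, ∑ k, (∑ i, V i k j) ^ 2 := by
        simp only [frobSq_eq_sum_sq, Matrix.sum_apply]
    _ ≤ ∑ j, ∑ k, Fintype.card ι * ∑ i, V i k j ^ 2 := by
        gcongr
        exact sq_sum_le_card_mul_sum_sq
    _ = Fintype.card ι * ∑ i, frobSq (V i) := by
        simp only [frobSq_eq_sum_sq, ← mul_sum]
        exact congrArg _ ((sum_congr rfl fun _ _ => sum_comm).trans sum_comm)

end Frobenius

section Laplacian

variable {n : ℕ} (a : Matrix (Fin n) (Fin n) ℝ) {M : Type*} [AddCommGroup M] [Module ℝ M]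

def laplacian (Z : Fin n → M) : Fin n → M :=
  fun i => ∑ j, a i j • (Z i - Z j)

def laplacianₗ : (Fin n → M) →ₗ[ℝ] (Fin n → M) where
  toFun := laplacian a
  map_add' Z Z' := by
    ext i
    simp only [laplacian, Pi.add_apply, add_sub_add_comm, smul_add, sum_add_distrib]
  map_smul' c Z := by
    ext i
    simp only [laplacian, Pi.smul_apply, RingHom.id_apply, smul_sum, ← smul_sub, smul_comm c]

variable {a}

lemma sum_laplacian (hsym : ∀ i j, a i j = a j i) (Z : Fin n → M) :
    ∑ i, laplacian a Z i = 0 := by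
  simp only [laplacian, smul_sub, sum_sub_distrib]
  rw [sub_eq_zero, sum_comm]
  exact sum_congr rfl fun i _ => sum_congr rfl fun j _ => by rw [hsym]

lemma laplacian_smul_const (w : Fin n → ℝ) (m : M) :
    laplacian a (fun i => w i • m) = fun i => laplacian a w i • m := by
  ext i
  simp only [laplacian, sum_smul, smul_eq_mul, mul_smul, sub_smul]

lemma two_mul_sum_mul_laplacian (hsym : ∀ i j, a i j = a j i) (z : Fin n → ℝ) :
    2 * ∑ i, z i * laplacian a z i = ∑ i, ∑ j, a i j * (z i - z j) ^ 2 := by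
  have hunfold : ∑ i, z i * laplacian a z i = ∑ i, ∑ j, a i j * (z i * (z i - z j)) := by
    simp only [laplacian, smul_eq_mul, mul_sum, mul_left_comm]
  have hswap : ∑ i, ∑ j, a i j * (z i * (z i - z j)) =
      ∑ i, ∑ j, a i j * (z j * (z j - z i)) := by
    rw [sum_comm]
    exact sum_congr rfl fun i _ => sum_congr rfl fun j _ => by rw [hsym]
  rw [two_mul, hunfold]
  nth_rw 2 [hswap]
  simp only [← sum_add_distrib]
  exact sum_congr rfl fun i _ => sum_congr rfl fun j _ => by ring

lemma eq_of_laplacian_eq_zero (hsym : ∀ i j, a i j = a j i) (hnonneg : ∀ i j, 0 ≤ a i j)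
    (hconn : GraphConnected a) {z : Fin n → ℝ} (hz : laplacian a z = 0) (i j : Fin n) :
    z i = z j := by
  have hnn : ∀ u v, 0 ≤ a u v * (z u - z v) ^ 2 := fun u v =>
    mul_nonneg (hnonneg u v) (sq_nonneg _)
  have hterm : ∀ u v, a u v * (z u - z v) ^ 2 = 0 := by
    have hsum := two_mul_sum_mul_laplacian hsym z
    simp only [hz, Pi.zero_apply, mul_zero, sum_const_zero] at hsum
    rw [eq_comm, Fintype.sum_eq_zero_iff_of_nonneg fun u => sum_nonneg fun v _ => hnn u v]
      at hsum
    intro u v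
    exact congrFun ((Fintype.sum_eq_zero_iff_of_nonneg (hnn u)).mp (congrFun hsum u)) v
  have hedge : ∀ u v, 0 < a u v → z u = z v := fun u v huv => by
    simpa [huv.ne', sub_eq_zero] using hterm u v
  induction hconn i j with
  | refl => rfl
  | tail _ hadj ih => exact ih.trans (hedge _ _ hadj.2)

lemma range_laplacianₗ (hn : 0 < n) (hsym : ∀ i j, a i j = a j i) (hnonneg : ∀ i j, 0 ≤ a i j)
    (hconn : GraphConnected a) :
    LinearMap.range (laplacianₗ a) =
      LinearMap.ker (∑ i, LinearMap.proj i : (Fin n → ℝ) →ₗ[ℝ] ℝ) := by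
  have hmem : ∀ w, w ∈ LinearMap.ker (∑ i, LinearMap.proj i : (Fin n → ℝ) →ₗ[ℝ] ℝ) ↔
      ∑ i, w i = 0 := by
    simp
  let i₀ : Fin n := ⟨0, hn⟩
  have hle : LinearMap.range (laplacianₗ a) ≤
      LinearMap.ker (∑ i, LinearMap.proj i : (Fin n → ℝ) →ₗ[ℝ] ℝ) := by
    rintro _ ⟨z, rfl⟩
    exact (hmem _).mpr (sum_laplacian hsym z)
  have hker : LinearMap.ker (laplacianₗ a) ≤ ℝ ∙ (fun _ => (1 : ℝ)) := fun z hz => by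
    refine Submodule.mem_span_singleton.mpr ⟨z i₀, funext fun i => ?_⟩
    simp [eq_of_laplacian_eq_zero hsym hnonneg hconn (LinearMap.mem_ker.mp hz) i₀ i]
  have hker_rank : Module.finrank ℝ (LinearMap.ker (laplacianₗ a (M := ℝ))) ≤ 1 :=
    (Submodule.finrank_mono hker).trans ((finrank_span_le_card _).trans (by simp))
  have hproper : LinearMap.ker (∑ i, LinearMap.proj i : (Fin n → ℝ) →ₗ[ℝ] ℝ) ≠ ⊤ :=
    fun htop => by simpa [i₀] using (hmem (Pi.single i₀ 1)).mp (htop ▸ Submodule.mem_top)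
  -- rank–nullity: the range has dimension at least `n - 1`, the zero-sum hyperplane less than `n`
  have hrank := LinearMap.finrank_range_add_finrank_ker (laplacianₗ a (M := ℝ))
  have hlt := Submodule.finrank_lt hproper
  simp only [Module.finrank_fin_fun] at hrank hlt
  exact Submodule.eq_of_le_of_finrank_le hle (by omega)

lemma exists_laplacian_eq (hn : 0 < n) (hsym : ∀ i j, a i j = a j i)
    (hnonneg : ∀ i j, 0 ≤ a i j) (hconn : GraphConnected a) (D : Fin n → M)
    (hD : ∑ i, D i = 0) : ∃ Z, laplacian a Z = D := by
  let i₀ : Fin n := ⟨0, hn⟩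
  have hbasis : ∀ j, ∃ z : Fin n → ℝ, laplacian a z = Pi.single j 1 - Pi.single i₀ 1 := fun j =>
    show _ ∈ LinearMap.range (laplacianₗ a) by simp [range_laplacianₗ hn hsym hnonneg hconn]
  choose z hz using hbasis
  -- Since `∑ⱼ Dⱼ = 0`, `D = ∑ⱼ (eⱼ - e_{i₀}) Dⱼ`, and each `eⱼ - e_{i₀}` is the Laplacian of `z j`.
  refine ⟨∑ j, fun i => z j i • D j, ?_⟩
  calc laplacian a (∑ j, fun i => z j i • D j)
      = ∑ j, laplacian a (fun i => z j i • D j) := map_sum (laplacianₗ a) _ _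
    _ = ∑ j, fun i => (Pi.single j 1 - Pi.single i₀ 1 : Fin n → ℝ) i • D j := by
        simp only [laplacian_smul_const, hz]
    _ = D := by
        ext i
        simp [sub_smul, sum_sub_distrib, hD, Pi.single_apply, ite_smul]

end Laplacian

section Blocks

variable {n : ℕ} {d : Fin n → ℕ} {α β : Type*}

@[simp]
lemma embedRow_apply_self (i : Fin n) (Y : Matrix (Fin (d i)) β ℝ) (k : Fin (d i)) (j : β) :
    embedRow i Y ⟨i, k⟩ j = Y k j := by
  simp [embedRow]

@[simp]
lemma embedRow_apply_of_ne {i i' : Fin n} (h : i' ≠ i) (Y : Matrix (Fin (d i)) β ℝ)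
    (k : Fin (d i')) (j : β) : embedRow i Y ⟨i', k⟩ j = 0 := by
  simp [embedRow, h]

lemma sum_embedRow_rowBlk (Y : Matrix ((i : Fin n) × Fin (d i)) β ℝ) :
    ∑ i, embedRow i (rowBlk Y i) = Y := by
  ext ⟨i', k⟩ j
  rw [Matrix.sum_apply, sum_eq_single i' (fun i _ h => embedRow_apply_of_ne (Ne.symm h) _ k j)
    (by simp)]
  simp [rowBlk]

lemma sum_embedRow (F : ∀ i, Matrix (Fin (d i)) β ℝ) : ∑ i, embedRow i (F i) = blockRows F :=
  sum_embedRow_rowBlk (blockRows F)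

lemma blockCols_mul_embedRow (A : ∀ i, Matrix α (Fin (d i)) ℝ) (i : Fin n)
    (Y : Matrix (Fin (d i)) β ℝ) : blockCols A * embedRow i Y = A i * Y := by
  ext k j
  rw [Matrix.mul_apply, ← univ_sigma_univ, sum_sigma,
    sum_eq_single i (fun i' _ h => sum_eq_zero fun t _ => by simp [h]) (by simp)]
  simp [blockCols, Matrix.mul_apply]

lemma sum_mul_eq_blockCols_mul_sum_embedRow (A : ∀ i, Matrix α (Fin (d i)) ℝ)
    (Y : ∀ i, Matrix (Fin (d i)) β ℝ) :
    ∑ i, A i * Y i = blockCols A * ∑ i, embedRow i (Y i) := by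
  simp only [Matrix.mul_sum, blockCols_mul_embedRow]

lemma blockCols_mul_blockRows (A : ∀ i, Matrix α (Fin (d i)) ℝ)
    (B : ∀ i, Matrix (Fin (d i)) β ℝ) : blockCols A * blockRows B = ∑ i, A i * B i := by
  rw [sum_mul_eq_blockCols_mul_sum_embedRow, sum_embedRow]

lemma blockCols_surjective :
    Function.Surjective (blockCols : (∀ i, Matrix α (Fin (d i)) ℝ) → _) :=
  fun X => ⟨fun i => Matrix.of fun k t => X k ⟨i, t⟩, rfl⟩

end Blocks

section CRR

variable {n q : ℕ} {rdim mdim pdim : Fin n → ℕ} {a : Matrix (Fin n) (Fin n) ℝ}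
  {Al : ∀ i, Matrix ((i' : Fin n) × Fin (mdim i')) (Fin (rdim i)) ℝ}
  {Bv : ∀ i, Matrix (Fin (pdim i)) (Fin q) ℝ} {Fv : ∀ i, Matrix (Fin (mdim i)) (Fin q) ℝ}
  {Xl : ∀ i, Matrix ((i' : Fin n) × Fin (rdim i')) (Fin (pdim i)) ℝ}
  {Yv : ∀ i, Matrix (Fin (rdim i)) (Fin q) ℝ}
  {Z : Fin n → Matrix ((i : Fin n) × Fin (rdim i)) (Fin q) ℝ}
  {U W : Fin n → Matrix ((i : Fin n) × Fin (mdim i)) (Fin q) ℝ}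

lemma CRRfeas_iff : CRRfeas a Bv Xl Yv Z U W ↔
    (∀ i, embedRow i (Yv i) = Xl i * Bv i + laplacian a Z i) ∧ ∀ i, U i = laplacian a W i := by
  simp only [CRRfeas, laplacian, sub_sub, sub_eq_zero]

lemma CRRfeas.sum_residual_eq (h : CRRfeas a Bv Xl Yv Z U W) (hsym : ∀ i j, a i j = a j i) :
    ∑ i, (Al i * Yv i - embedRow i (Fv i) - U i) =
      blockCols Al * blockCols Xl * blockRows Bv - blockRows Fv := by
  obtain ⟨hY, hU⟩ := CRRfeas_iff.mp h
  have hsumY : ∑ i, embedRow i (Yv i) = blockCols Xl * blockRows Bv := by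
    simp only [hY, sum_add_distrib, sum_laplacian hsym, add_zero, blockCols_mul_blockRows]
  have hsumU : ∑ i, U i = 0 := by
    simp only [hU, sum_laplacian hsym]
  rw [sum_sub_distrib, sum_sub_distrib, sum_mul_eq_blockCols_mul_sum_embedRow, hsumY, hsumU,
    sum_embedRow, Matrix.mul_assoc, sub_zero]

lemma CRRfeas.frobSq_le_card_mul_CRRobj (h : CRRfeas a Bv Xl Yv Z U W)
    (hsym : ∀ i j, a i j = a j i) :
    frobSq (blockCols Al * blockCols Xl * blockRows Bv - blockRows Fv) ≤
      n * CRRobj Al Fv Yv U := by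
  rw [← h.sum_residual_eq hsym]
  exact (frobSq_sum_le_card_mul _).trans_eq (by rw [Fintype.card_fin, CRRobj])

lemma exists_CRRfeas_card_mul_CRRobj_eq (hn : 0 < n) (hsym : ∀ i j, a i j = a j i)
    (hnonneg : ∀ i j, 0 ≤ a i j) (hconn : GraphConnected a)
    (Al : ∀ i, Matrix ((i' : Fin n) × Fin (mdim i')) (Fin (rdim i)) ℝ)
    (Bv : ∀ i, Matrix (Fin (pdim i)) (Fin q) ℝ) (Fv : ∀ i, Matrix (Fin (mdim i)) (Fin q) ℝ)
    (Xl : ∀ i, Matrix ((i' : Fin n) × Fin (rdim i')) (Fin (pdim i)) ℝ) :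
    ∃ (Yv : ∀ i, Matrix (Fin (rdim i)) (Fin q) ℝ)
      (Z : Fin n → Matrix ((i : Fin n) × Fin (rdim i)) (Fin q) ℝ)
      (U W : Fin n → Matrix ((i : Fin n) × Fin (mdim i)) (Fin q) ℝ),
      CRRfeas a Bv Xl Yv Z U W ∧
        n * CRRobj Al Fv Yv U =
          frobSq (blockCols Al * blockCols Xl * blockRows Bv - blockRows Fv) := by
  have hn' : (n : ℝ) ≠ 0 := Nat.cast_ne_zero.mpr hn.ne'
  let Yv i := rowBlk (blockCols Xl * blockRows Bv) i
  obtain ⟨Z, hZ⟩ := exists_laplacian_eq hn hsym hnonneg hconn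
    (fun i => embedRow i (Yv i) - Xl i * Bv i)
    (by rw [sum_sub_distrib, sum_embedRow_rowBlk, blockCols_mul_blockRows, sub_self])
  set G := blockCols Al * blockCols Xl * blockRows Bv - blockRows Fv
  let R i := Al i * Yv i - embedRow i (Fv i)
  have hsumR : ∑ i, R i = G := by
    rw [sum_sub_distrib, sum_mul_eq_blockCols_mul_sum_embedRow, sum_embedRow_rowBlk, sum_embedRow,
      ← Matrix.mul_assoc]
  obtain ⟨W, hW⟩ := exists_laplacian_eq hn hsym hnonneg hconn (fun i => R i - (n : ℝ)⁻¹ • G)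
    (by simp [sum_sub_distrib, hsumR, ← Nat.cast_smul_eq_nsmul ℝ, smul_smul, hn'])
  refine ⟨Yv, Z, fun i => R i - (n : ℝ)⁻¹ • G, W, CRRfeas_iff.mpr ⟨fun i => ?_, fun i => ?_⟩, ?_⟩
  · rw [congrFun hZ i]
    abel
  · exact (congrFun hW i).symm
  · simp only [CRRobj, R, sub_sub_cancel, frobSq_smul, sum_const, card_univ, Fintype.card_fin,
      nsmul_eq_mul]
    field_simp

end CRR

theorem stmt_15_general (n q : ℕ) (hn : 0 < n) (rdim mdim pdim : Fin n → ℕ)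
    (a : Matrix (Fin n) (Fin n) ℝ)
    (hsym : ∀ i j, a i j = a j i) (hnonneg : ∀ i j, 0 ≤ a i j)
    (hconn : GraphConnected a)
    (Al : ∀ i, Matrix ((i' : Fin n) × Fin (mdim i')) (Fin (rdim i)) ℝ)
    (Bv : ∀ i, Matrix (Fin (pdim i)) (Fin q) ℝ)
    (Fv : ∀ i, Matrix (Fin (mdim i)) (Fin q) ℝ)
    (Xl : ∀ i, Matrix ((i' : Fin n) × Fin (rdim i')) (Fin (pdim i)) ℝ) :
    (∀ X' : Matrix ((i : Fin n) × Fin (rdim i)) ((i : Fin n) × Fin (pdim i)) ℝ,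
        frobSq (blockCols Al * blockCols Xl * blockRows Bv - blockRows Fv) ≤
          frobSq (blockCols Al * X' * blockRows Bv - blockRows Fv)) ↔
      (∃ Yv : ∀ i, Matrix (Fin (rdim i)) (Fin q) ℝ,
        ∃ Z : Fin n → Matrix ((i : Fin n) × Fin (rdim i)) (Fin q) ℝ,
          ∃ U W : Fin n → Matrix ((i : Fin n) × Fin (mdim i)) (Fin q) ℝ,
            CRRfeas a Bv Xl Yv Z U W ∧
              ∀ Xl' : ∀ i, Matrix ((i' : Fin n) × Fin (rdim i')) (Fin (pdim i)) ℝ,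
                ∀ Yv' : ∀ i, Matrix (Fin (rdim i)) (Fin q) ℝ,
                  ∀ Z' : Fin n → Matrix ((i : Fin n) × Fin (rdim i)) (Fin q) ℝ,
                    ∀ U' W' : Fin n → Matrix ((i : Fin n) × Fin (mdim i)) (Fin q) ℝ,
                      CRRfeas a Bv Xl' Yv' Z' U' W' →
                        CRRobj Al Fv Yv U ≤ CRRobj Al Fv Yv' U') := by
  have hn' : (0 : ℝ) < n := Nat.cast_pos.mpr hn
  have hvalue := exists_CRRfeas_card_mul_CRRobj_eq hn hsym hnonneg hconn Al Bv Fv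
  constructor
  · intro hls
    obtain ⟨Yv, Z, U, W, hfeas, hobj⟩ := hvalue Xl
    refine ⟨Yv, Z, U, W, hfeas, fun Xl' Yv' Z' U' W' hfeas' => le_of_mul_le_mul_left ?_ hn'⟩
    calc n * CRRobj Al Fv Yv U = _ := hobj
      _ ≤ _ := hls (blockCols Xl')
      _ ≤ n * CRRobj Al Fv Yv' U' := hfeas'.frobSq_le_card_mul_CRRobj hsym
  · rintro ⟨Yv, Z, U, W, hfeas, hopt⟩ X'
    obtain ⟨Xl', rfl⟩ := blockCols_surjective X'
    obtain ⟨Yv', Z', U', W', hfeas', hobj'⟩ := hvalue Xl'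
    calc _ ≤ n * CRRobj Al Fv Yv U := hfeas.frobSq_le_card_mul_CRRobj hsym
      _ ≤ n * CRRobj Al Fv Yv' U' := by gcongr; exact hopt _ _ _ _ _ hfeas'
      _ = _ := hobj'

theorem stmt_15 (n q : ℕ) (hn : 0 < n) (rdim mdim pdim : Fin n → ℕ)
    (a : Matrix (Fin n) (Fin n) ℝ)
    (hsym : ∀ i j, a i j = a j i) (hnonneg : ∀ i j, 0 ≤ a i j)
    (hdiag : ∀ i, a i i = 0) (hconn : GraphConnected a)
    (Al : ∀ i, Matrix ((i' : Fin n) × Fin (mdim i')) (Fin (rdim i)) ℝ)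
    (Bv : ∀ i, Matrix (Fin (pdim i)) (Fin q) ℝ)
    (Fv : ∀ i, Matrix (Fin (mdim i)) (Fin q) ℝ)
    (Xl : ∀ i, Matrix ((i' : Fin n) × Fin (rdim i')) (Fin (pdim i)) ℝ) :
    (∀ X' : Matrix ((i : Fin n) × Fin (rdim i)) ((i : Fin n) × Fin (pdim i)) ℝ,
        frobSq (blockCols Al * blockCols Xl * blockRows Bv - blockRows Fv) ≤
          frobSq (blockCols Al * X' * blockRows Bv - blockRows Fv)) ↔
      (∃ Yv : ∀ i, Matrix (Fin (rdim i)) (Fin q) ℝ,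
        ∃ Z : Fin n → Matrix ((i : Fin n) × Fin (rdim i)) (Fin q) ℝ,
          ∃ U W : Fin n → Matrix ((i : Fin n) × Fin (mdim i)) (Fin q) ℝ,
            CRRfeas a Bv Xl Yv Z U W ∧
              ∀ Xl' : ∀ i, Matrix ((i' : Fin n) × Fin (rdim i')) (Fin (pdim i)) ℝ,
                ∀ Yv' : ∀ i, Matrix (Fin (rdim i)) (Fin q) ℝ,
                  ∀ Z' : Fin n → Matrix ((i : Fin n) × Fin (rdim i)) (Fin q) ℝ,
                    ∀ U' W' : Fin n → Matrix ((i : Fin n) × Fin (mdim i)) (Fin q) ℝ,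
                      CRRfeas a Bv Xl' Yv' Z' U' W' →
                        CRRobj Al Fv Yv U ≤ CRRobj Al Fv Yv' U') :=
  stmt_15_general n q hn rdim mdim pdim a hsym hnonneg hconn Al Bv Fv Xl
end

section
/- Let a be the adjacency matrix of a connected weighted undirected graph on n nodes, and let V₁,…,Vₙ ∈ ℝ^{r×q}. Then Σ_{i=1}^n V_i = 0 (the r×q zero matrix) if and only if there exist Z₁,…,Zₙ ∈ ℝ^{r×q} such that V_i = Σ_{j=1}^n a_{i,j}(Z_i − Z_j) for every i = 1,…,n. -/
/-!
Entrywise, the claim is that a vector `v ∈ ℝⁿ` lies in the range of the weighted Laplacian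
`L z i = ∑ j, a i j * (z i - z j)` iff its coordinates sum to zero. Symmetry of `a` makes
every `L z` sum to zero. Conversely, `2 ⟪z, L z⟫ = ∑ i j, a i j * (z i - z j) ^ 2`, so
`L z = 0` forces `z` to be constant along edges, hence constant on a connected graph; thus
`ker L` has dimension at most one, and by rank–nullity the range of `L` fills the hyperplane
of zero-sum vectors.
-/

open Matrix

open Finset

section WeightedLaplacian

variable {ι : Type*} [Fintype ι] (a : Matrix ι ι ℝ)

def weightedLaplacian : (ι → ℝ) →ₗ[ℝ] ι → ℝ where
  toFun z i := ∑ j, a i j * (z i - z j)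
  map_add' z w := by
    ext i; simp only [Pi.add_apply, ← sum_add_distrib]; exact sum_congr rfl fun j _ => by ring
  map_smul' c z := by
    ext i; simp only [Pi.smul_apply, smul_eq_mul, RingHom.id_apply, mul_sum]
    exact sum_congr rfl fun j _ => by ring

@[simp]
lemma weightedLaplacian_apply (z : ι → ℝ) (i : ι) :
    weightedLaplacian a z i = ∑ j, a i j * (z i - z j) := rfl

variable {a}

lemma sum_weightedLaplacian (hsym : ∀ i j, a i j = a j i) (z : ι → ℝ) :
    ∑ i, weightedLaplacian a z i = 0 := by
  have h : ∑ i, weightedLaplacian a z i = -∑ i, weightedLaplacian a z i := by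
    simp only [weightedLaplacian_apply, ← sum_neg_distrib]
    rw [sum_comm]
    exact sum_congr rfl fun i _ => sum_congr rfl fun j _ => by rw [hsym]; ring
  linarith

lemma two_mul_sum_mul_weightedLaplacian (hsym : ∀ i j, a i j = a j i) (z : ι → ℝ) :
    2 * ∑ i, z i * weightedLaplacian a z i = ∑ i, ∑ j, a i j * (z i - z j) ^ 2 := by
  have hswap :
      ∑ i, ∑ j, a i j * z i * (z i - z j) = ∑ i, ∑ j, a i j * z j * (z j - z i) := by
    rw [sum_comm]
    exact sum_congr rfl fun i _ => sum_congr rfl fun j _ => by rw [hsym]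
  calc 2 * ∑ i, z i * weightedLaplacian a z i
      = ∑ i, ∑ j, a i j * z i * (z i - z j) + ∑ i, ∑ j, a i j * z j * (z j - z i) := by
        rw [← hswap, two_mul]
        congr 1 <;> exact sum_congr rfl fun i _ => by
          rw [weightedLaplacian_apply, mul_sum]; exact sum_congr rfl fun j _ => by ring
    _ = ∑ i, ∑ j, a i j * (z i - z j) ^ 2 := by
        simp only [← sum_add_distrib]
        exact sum_congr rfl fun i _ => sum_congr rfl fun j _ => by ring

lemma eq_of_weightedLaplacian_eq_zero (hsym : ∀ i j, a i j = a j i)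
    (hnonneg : ∀ i j, 0 ≤ a i j) {z : ι → ℝ} (hz : weightedLaplacian a z = 0) {i j : ι}
    (hij : 0 < a i j) : z i = z j := by
  have hsum : ∑ i, ∑ j, a i j * (z i - z j) ^ 2 = 0 := by
    rw [← two_mul_sum_mul_weightedLaplacian hsym, hz]; simp
  have hterm : a i j * (z i - z j) ^ 2 = 0 := by
    have hnonneg' : ∀ i j, 0 ≤ a i j * (z i - z j) ^ 2 := fun i j => by
      have := hnonneg i j; positivity
    have hrow :=
      (Fintype.sum_eq_zero_iff_of_nonneg fun i => sum_nonneg fun j _ => hnonneg' i j).1 hsum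
    exact congrFun ((Fintype.sum_eq_zero_iff_of_nonneg (hnonneg' i)).1 (congrFun hrow i)) j
  simpa [hij.ne', sub_eq_zero] using hterm

lemma ker_weightedLaplacian_le_span_one (hsym : ∀ i j, a i j = a j i)
    (hnonneg : ∀ i j, 0 ≤ a i j)
    (hconn : ∀ i j, Relation.ReflTransGen (fun u v => 0 < a u v) i j) :
    LinearMap.ker (weightedLaplacian a) ≤ ℝ ∙ 1 := by
  intro z hz
  have hconst (i j : ι) : z i = z j := by
    induction hconn i j with
    | refl => rfl
    | tail _ hbc ih => exact ih.trans (eq_of_weightedLaplacian_eq_zero hsym hnonneg hz hbc)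
  rw [Submodule.mem_span_singleton]
  rcases isEmpty_or_nonempty ι with hι | ⟨⟨i₀⟩⟩
  · exact ⟨0, Subsingleton.elim _ _⟩
  · exact ⟨z i₀, funext fun i => by simp [hconst i i₀]⟩

lemma mem_range_weightedLaplacian_iff (hsym : ∀ i j, a i j = a j i)
    (hnonneg : ∀ i j, 0 ≤ a i j)
    (hconn : ∀ i j, Relation.ReflTransGen (fun u v => 0 < a u v) i j)
    {v : ι → ℝ} : v ∈ LinearMap.range (weightedLaplacian a) ↔ ∑ i, v i = 0 := by
  set σ : (ι → ℝ) →ₗ[ℝ] ℝ := Fintype.linearCombination ℝ fun _ => 1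
  have hσ (w : ι → ℝ) : σ w = ∑ i, w i := by simp [σ, Fintype.linearCombination_apply]
  suffices LinearMap.range (weightedLaplacian a) = LinearMap.ker σ by simp [this, hσ]
  have hle : LinearMap.range (weightedLaplacian a) ≤ LinearMap.ker σ := by
    rintro _ ⟨z, rfl⟩
    rw [LinearMap.mem_ker, hσ, sum_weightedLaplacian hsym]
  refine Submodule.eq_of_le_of_finrank_le hle ?_
  have hker : Module.finrank ℝ (LinearMap.ker (weightedLaplacian a)) ≤ 1 :=
    (Submodule.finrank_mono (ker_weightedLaplacian_le_span_one hsym hnonneg hconn)).trans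
      (by simpa using finrank_span_le_card ({1} : Set (ι → ℝ)))
  have hrankL := LinearMap.finrank_range_add_finrank_ker (weightedLaplacian a)
  have hrankσ := LinearMap.finrank_range_add_finrank_ker σ
  rcases isEmpty_or_nonempty ι with hι | ⟨⟨i₀⟩⟩
  · simp [Module.finrank_zero_of_subsingleton]
  · classical
    have hσsurj : LinearMap.range σ = ⊤ :=
      LinearMap.range_eq_top.2 fun c => ⟨Pi.single i₀ c, by simp [hσ]⟩
    rw [hσsurj, finrank_top, Module.finrank_self] at hrankσ
    omega

end WeightedLaplacian

theorem stmt_19_general (n r q : ℕ) (a : Matrix (Fin n) (Fin n) ℝ)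
    (hsym : ∀ i j, a i j = a j i) (hnonneg : ∀ i j, 0 ≤ a i j)
    (hconn : GraphConnected a)
    (V : Fin n → Matrix (Fin r) (Fin q) ℝ) :
    (∑ i, V i = 0) ↔
      ∃ Z : Fin n → Matrix (Fin r) (Fin q) ℝ,
        ∀ i, V i = ∑ j, a i j • (Z i - Z j) := by
  have hconn' (i j : Fin n) : Relation.ReflTransGen (fun u v => 0 < a u v) i j :=
    Relation.ReflTransGen.mono (fun _ _ h => h.2) i j (hconn i j)
  have hentry (s : Fin r) (t : Fin q) :=
    mem_range_weightedLaplacian_iff hsym hnonneg hconn' (v := fun i => V i s t)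
  constructor
  · intro hV
    choose z hz using fun s t =>
      (hentry s t).2 (by simpa [Matrix.sum_apply] using congr($hV s t))
    refine ⟨fun i => Matrix.of fun s t => z s t i, fun i => ?_⟩
    ext s t
    simpa [Matrix.sum_apply] using (congrFun (hz s t) i).symm
  · rintro ⟨Z, hZ⟩
    ext s t
    simpa [Matrix.sum_apply] using
      (hentry s t).1 ⟨fun j => Z j s t, funext fun i => by simp [hZ, Matrix.sum_apply]⟩

theorem stmt_19 (n r q : ℕ) (a : Matrix (Fin n) (Fin n) ℝ)
    (hsym : ∀ i j, a i j = a j i) (hnonneg : ∀ i j, 0 ≤ a i j)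
    (hdiag : ∀ i, a i i = 0) (hconn : GraphConnected a)
    (V : Fin n → Matrix (Fin r) (Fin q) ℝ) :
    (∑ i, V i = 0) ↔
      ∃ Z : Fin n → Matrix (Fin r) (Fin q) ℝ,
        ∀ i, V i = ∑ j, a i j • (Z i - Z j) :=
  stmt_19_general n r q a hsym hnonneg hconn V
end
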